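/- If α⋆β = α⋆β' with β and β' of the same sign (both positive or both negative), then β = β'. -/

import Mathlib

open Metric Set
open scoped Classical

/-- Four-point condition for δ-hyperbolicity. -/
def FourPointHyp (X : Type*) [MetricSpace X] (δ : ℝ) : Prop :=
  ∀ x y z w : X,
    dist x y + dist z w ≤ max (dist x z + dist y w) (dist y z + dist x w) + 2 * δ

/-- `s` is a geodesic segment from `a` to `b`. -/
def IsGeodSegment {X : Type*} [MetricSpace X] (a b : X) (s : Set X) : Prop :=
  ∃ f : ℝ → X, f 0 = a ∧ f (dist a b) = b ∧
    (∀ u ∈ Icc (0:ℝ) (dist a b), ∀ v ∈ Icc (0:ℝ) (dist a b),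
      dist (f u) (f v) = |u - v|) ∧
    s = f '' Icc (0:ℝ) (dist a b)

/-- `X` is a geodesic space. -/
def IsGeodesicSpace (X : Type*) [MetricSpace X] : Prop :=
  ∀ a b : X, ∃ s : Set X, IsGeodSegment a b s

/-- `τ : ℝ → X` is a geodesic line. -/
def IsGeodLine {X : Type*} [MetricSpace X] (τ : ℝ → X) : Prop :=
  ∀ u v : ℝ, dist (τ u) (τ v) = |u - v|

/-- The action of `G` on `X` is by isometries. -/
def IsomAction (G X : Type*) [Group G] [MetricSpace X] [MulAction G X] : Prop :=
  ∀ (γ : G) (x y : X), dist (γ • x) (γ • y) = dist x y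

/-- A group element `ξ` is hyperbolic: `n ↦ ξⁿ(x)` is a quasi-isometric embedding
of `ℤ` into `X`. -/
def IsHypElem {G : Type*} (X : Type*) [Group G] [MetricSpace X] [MulAction G X]
    (ξ : G) : Prop :=
  ∃ x : X, ∃ A : ℝ, 0 < A ∧ ∃ B : ℝ, ∀ m n : ℤ,
    A * |(m : ℝ) - (n : ℝ)| - B ≤ dist ((ξ ^ m) • x) ((ξ ^ n) • x)

/-- An axis of `ξ`: a geodesic line whose image is at finite Hausdorff distance
from its `ξ`-image (equivalently, joining the two fixed points of `ξ` at
infinity). -/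
def IsAxisAct {G X : Type*} [Group G] [MetricSpace X] [MulAction G X]
    (ξ : G) (τ : ℝ → X) : Prop :=
  IsGeodLine τ ∧ ∃ C : ℝ,
    (∀ t : ℝ, infDist (ξ • τ t) (range τ) ≤ C) ∧
    (∀ t : ℝ, infDist (τ t) (range fun s => ξ • τ s) ≤ C)

/-- The orbit points `x₁ = O`, `xᵢ = ξ^{i-1}(O)` for `i > 0`, `xᵢ = ξ^{i}(O)` for
`i < 0`. -/
noncomputable def orbitPt {G X : Type*} [Group G] [MetricSpace X] [MulAction G X]
    (ξ : G) (O : X) (i : ℤ) : X :=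
  if 0 < i then (ξ ^ (i - 1)) • O else (ξ ^ i) • O

/-- The Voronoi cell `Dᵢ` of the orbit point `xᵢ`. -/
noncomputable def vorCell {G X : Type*} [Group G] [MetricSpace X] [MulAction G X]
    (ξ : G) (O : X) (i : ℤ) : Set X :=
  {y : X | ∀ j : ℤ, j ≠ 0 → dist y (orbitPt ξ O i) ≤ dist y (orbitPt ξ O j)}

/-- `jx y` is the smallest index `j ∈ ℤ*` with `y ∈ D_j`. -/
def IsIndexFun {G X : Type*} [Group G] [MetricSpace X] [MulAction G X]
    (ξ : G) (O : X) (jx : X → ℤ) : Prop :=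
  ∀ y : X, jx y ≠ 0 ∧ y ∈ vorCell ξ O (jx y) ∧
    ∀ k : ℤ, k ≠ 0 → y ∈ vorCell ξ O k → jx y ≤ k

/-- The symmetric element `β₋ = ξ^{−2j−1}β` if `j = j(β) > 0`, and
`β₋ = ξ^{−2j+1}β` if `j < 0`. -/
noncomputable def symmElem {G X : Type*} [Group G] [MetricSpace X] [MulAction G X]
    (ξ : G) (O : X) (jx : X → ℤ) (β : G) : G :=
  if 0 < jx (β • O) then ξ ^ (-2 * jx (β • O) - 1) * β
  else ξ ^ (-2 * jx (β • O) + 1) * β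

/-- `D₁` or `D₋₁` separates points with indices `i` and `j`. -/
def Sep1 (i j : ℤ) : Prop :=
  (min i j < 1 ∧ 1 < max i j) ∨ (min i j < -1 ∧ -1 < max i j)

/-- The twisted product: `α⋆β = αβ₊` if `D₁` or `D₋₁` separates `α⁻¹(O)` and
`β(O)`, and `α⋆β = αβ₋` otherwise. -/
noncomputable def twProd {G X : Type*} [Group G] [MetricSpace X] [MulAction G X]
    (ξ : G) (O : X) (jx : X → ℤ) (α β : G) : G :=
  if Sep1 (jx (α⁻¹ • O)) (jx (β • O)) then α * β else α * symmElem ξ O jx β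

/-!
Translation by `ξ ^ m` permutes the orbit points, hence the Voronoi cells, shifting the exponent
of the orbit point by `m`; since this shift preserves the order of the indices, it also commutes
with the index function. Consequently `j(β₋) = -j(β) - 2` for `j(β) > 0` and `j(β₋) = -j(β) + 2`
for `j(β) < 0`: the map `β ↦ β₋` reverses signs and is injective. After cancelling `α` in
`α⋆β = α⋆β'`, the mixed cases `β = β'₋` and `β₋ = β'` contradict the sign assumption and the
remaining ones give `β = β'` directly.
-/

/-- The orbit point of the cell `Dᵢ` is `ξ ^ cellExp i • O`. -/
def cellExp (i : ℤ) : ℤ := if 0 < i then i - 1 else i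

def cellIdx (e : ℤ) : ℤ := if 0 ≤ e then e + 1 else e

lemma cellIdx_ne_zero (e : ℤ) : cellIdx e ≠ 0 := by
  unfold cellIdx; split_ifs <;> omega

lemma cellExp_cellIdx (e : ℤ) : cellExp (cellIdx e) = e := by
  unfold cellExp cellIdx; split_ifs <;> omega

lemma cellIdx_cellExp {i : ℤ} (hi : i ≠ 0) : cellIdx (cellExp i) = i := by
  unfold cellIdx cellExp; split_ifs <;> omega

lemma cellIdx_cellExp_add_le {k l : ℤ} (hkl : k ≤ l) (m : ℤ) :
    cellIdx (cellExp k + m) ≤ cellIdx (cellExp l + m) := by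
  unfold cellIdx cellExp; split_ifs <;> omega

section Translation

variable {G X : Type*} [Group G] [MetricSpace X] [MulAction G X] (ξ : G) (O : X)

lemma orbitPt_eq_zpow_smul (i : ℤ) : orbitPt ξ O i = (ξ ^ cellExp i) • O := by
  unfold orbitPt cellExp; split_ifs <;> rfl

lemma zpow_smul_orbitPt (m i : ℤ) :
    (ξ ^ m) • orbitPt ξ O i = orbitPt ξ O (cellIdx (cellExp i + m)) := by
  rw [orbitPt_eq_zpow_smul, orbitPt_eq_zpow_smul, cellExp_cellIdx, ← mul_smul, ← zpow_add,
    add_comm]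

variable {ξ O}

lemma zpow_smul_mem_vorCell_iff (hiso : IsomAction G X) (m i : ℤ) (y : X) :
    (ξ ^ m) • y ∈ vorCell ξ O (cellIdx (cellExp i + m)) ↔ y ∈ vorCell ξ O i := by
  constructor
  · intro h j _
    have := h (cellIdx (cellExp j + m)) (cellIdx_ne_zero _)
    rwa [← zpow_smul_orbitPt, ← zpow_smul_orbitPt, hiso, hiso] at this
  · intro h j hj
    have hj_shift : orbitPt ξ O j = (ξ ^ m) • orbitPt ξ O (cellIdx (cellExp j - m)) := by
      rw [zpow_smul_orbitPt, cellExp_cellIdx, sub_add_cancel, cellIdx_cellExp hj]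
    rw [hj_shift, ← zpow_smul_orbitPt, hiso, hiso]
    exact h _ (cellIdx_ne_zero _)

lemma IsIndexFun.apply_zpow_smul {jx : X → ℤ} (hjx : IsIndexFun ξ O jx)
    (hiso : IsomAction G X) (m : ℤ) (y : X) :
    jx ((ξ ^ m) • y) = cellIdx (cellExp (jx y) + m) := by
  obtain ⟨-, hy_mem, hy_min⟩ := hjx y
  obtain ⟨hξy_ne, hξy_mem, hξy_min⟩ := hjx ((ξ ^ m) • y)
  set k := jx ((ξ ^ m) • y)
  have hk_shift : cellIdx (cellExp (cellIdx (cellExp k - m)) + m) = k := by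
    rw [cellExp_cellIdx, sub_add_cancel, cellIdx_cellExp hξy_ne]
  refine le_antisymm
    (hξy_min _ (cellIdx_ne_zero _) ((zpow_smul_mem_vorCell_iff hiso m _ y).2 hy_mem)) ?_
  have hy_mem' : y ∈ vorCell ξ O (cellIdx (cellExp k - m)) :=
    (zpow_smul_mem_vorCell_iff hiso m _ y).1 (by rwa [hk_shift])
  simpa only [hk_shift] using cellIdx_cellExp_add_le (hy_min _ (cellIdx_ne_zero _) hy_mem') m

variable {jx : X → ℤ}

lemma IsIndexFun.apply_symmElem_smul (hjx : IsIndexFun ξ O jx) (hiso : IsomAction G X) (β : G) :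
    jx (symmElem ξ O jx β • O) =
      if 0 < jx (β • O) then -jx (β • O) - 2 else -jx (β • O) + 2 := by
  have hβ_ne := (hjx (β • O)).1
  unfold symmElem
  split_ifs <;>
    · rw [mul_smul, hjx.apply_zpow_smul hiso]
      unfold cellIdx cellExp
      split_ifs <;> omega

lemma IsIndexFun.pos_apply_symmElem_smul_iff (hjx : IsIndexFun ξ O jx) (hiso : IsomAction G X)
    (β : G) : 0 < jx (symmElem ξ O jx β • O) ↔ ¬ 0 < jx (β • O) := by
  have hβ_ne := (hjx (β • O)).1
  rw [hjx.apply_symmElem_smul hiso]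
  split_ifs <;> omega

lemma IsIndexFun.symmElem_injective (hjx : IsIndexFun ξ O jx) (hiso : IsomAction G X) :
    Function.Injective (symmElem ξ O jx) := by
  intro β β' h
  have hβ_ne := (hjx (β • O)).1
  have hβ'_ne := (hjx (β' • O)).1
  have hj : jx (β • O) = jx (β' • O) := by
    have := congrArg (fun γ => jx (γ • O)) h
    simp only [hjx.apply_symmElem_smul hiso] at this
    split_ifs at this <;> omega
  unfold symmElem at h
  rw [hj] at h
  split_ifs at h <;> exact mul_left_cancel h

end Translation

theorem stmt17_general {G X : Type*} [Group G] [MetricSpace X] [MulAction G X]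
    (hiso : IsomAction G X)
    (ξ : G)
    (O : X)
    (jx : X → ℤ) (hjx : IsIndexFun ξ O jx) :
    ∀ α β β' : G, (0 < jx (β • O) ↔ 0 < jx (β' • O)) →
      twProd ξ O jx α β = twProd ξ O jx α β' → β = β' := by
  intro α β β' hsign h
  unfold twProd at h
  split_ifs at h
  · exact mul_left_cancel h
  · rw [mul_left_cancel h, hjx.pos_apply_symmElem_smul_iff hiso] at hsign
    tauto
  · rw [← mul_left_cancel h, hjx.pos_apply_symmElem_smul_iff hiso] at hsign
    tauto
  · exact hjx.symmElem_injective hiso (mul_left_cancel h)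

/-- If `α⋆β = α⋆β'` with `β` and `β'` of the same sign, then `β = β'`. -/
theorem stmt17 {G X : Type*} [Group G] [MetricSpace X] [MulAction G X]
    [ProperSpace X] (δ ε L : ℝ)
    (hδ : 0 < δ) (hε : 0 < ε) (hεδ : ε < δ)
    (hyp : FourPointHyp X δ) (hgeo : IsGeodesicSpace X)
    (hiso : IsomAction G X)
    (ξ : G) (hhyp : IsHypElem X ξ) (τ : ℝ → X) (hax : IsAxisAct ξ τ)
    (hL : L = ⨅ x : X, dist x (ξ • x)) (hL300 : 300 * δ ≤ L)
    (O : X) (hO : dist O (ξ • O) ≤ L + ε)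
    (jx : X → ℤ) (hjx : IsIndexFun ξ O jx) :
    ∀ α β β' : G, (0 < jx (β • O) ↔ 0 < jx (β' • O)) →
      twProd ξ O jx α β = twProd ξ O jx α β' → β = β' :=
  stmt17_general hiso ξ O jx hjx
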